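/- For a twisted superpotential ω with twist τ chosen so that the arrow basis is closed under τ, the coefficients c_p in e(ω⊗1)e = Σ_{|p|=n} c_p p satisfy the twisted cyclic symmetry c_{p₁⋯pₙ} = (-1)^{n-1} c_{pₙ^τ p₁p₂⋯p_{n-1}} for every length-n path p = p₁⋯pₙ. -/

import Mathlib

open scoped Classical

noncomputable section

variable {V : Type} [Quiver.{1} V]

abbrev PathsOf (V : Type) [Quiver.{1} V] := Σ a b : V, Quiver.Path a b
abbrev ArrowOf (V : Type) [Quiver.{1} V] := Σ a b : V, a ⟶ b
abbrev PathAlg (V : Type) [Quiver.{1} V] := PathsOf V →₀ ℂ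

def pathBasis (p : PathsOf V) : PathAlg V := Finsupp.single p 1

/-- A graded automorphism τ of the path algebra permuting vertices and
arrows. -/
structure QuivAut (V : Type) [Quiver.{1} V] where
  onV : V ≃ V
  onA : ∀ {a b : V}, (a ⟶ b) ≃ (onV a ⟶ onV b)

def QuivAut.mapArrow (τ : QuivAut V) (e : ArrowOf V) : ArrowOf V :=
  ⟨τ.onV e.1, τ.onV e.2.1, τ.onA e.2.2⟩

def popFirst {a : V} : ∀ {b : V}, Quiver.Path a b →
    Option (Σ c : V, (a ⟶ c) × Quiver.Path c b)
  | _, .nil => none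
  | _, .cons .nil f => some ⟨_, f, .nil⟩
  | _, .cons (.cons p g) f =>
      match popFirst (.cons p g) with
      | none => none
      | some ⟨c, a0, rest⟩ => some ⟨c, a0, rest.cons f⟩

/-- Left derivative `[a* q]` of a basis path by an arrow. -/
def lderBasis (e : ArrowOf V) : PathsOf V → PathAlg V
  | ⟨a, b, q⟩ =>
    match q with
    | Quiver.Path.nil => 0
    | @Quiver.Path.cons _ _ _ c _ p f =>
        if (⟨c, b, f⟩ : ArrowOf V) = e then pathBasis ⟨a, c, p⟩ else 0

/-- Right derivative `[q a*]` of a basis path by an arrow. -/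
def rderBasis (e : ArrowOf V) : PathsOf V → PathAlg V
  | ⟨a, b, q⟩ =>
    match popFirst q with
    | some ⟨c, a0, rest⟩ =>
        if (⟨a, c, a0⟩ : ArrowOf V) = e then pathBasis ⟨c, b, rest⟩ else 0
    | none => 0

def lder (e : ArrowOf V) : PathAlg V →ₗ[ℂ] PathAlg V :=
  Finsupp.lsum ℂ fun q => LinearMap.toSpanSingleton ℂ _ (lderBasis e q)

def rder (e : ArrowOf V) : PathAlg V →ₗ[ℂ] PathAlg V :=
  Finsupp.lsum ℂ fun q => LinearMap.toSpanSingleton ℂ _ (rderBasis e q)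

/-- The twisted cyclic shift: `p₁⋯pₙ ↦ pₙ^τ p₁⋯p_{n-1}` on a basis path
(and `0` if the result is not composable). -/
def twistShiftBasis (τ : QuivAut V) : PathsOf V → PathAlg V
  | ⟨a, b, q⟩ =>
    match popFirst q with
    | none => 0
    | some ⟨c, a0, rest⟩ =>
        if h : b = τ.onV a then
          pathBasis ⟨c, τ.onV c, (h ▸ rest).comp (τ.onA a0).toPath⟩
        else 0

lemma PathsOf.eq_nil_or_eq_toPath_comp (P : PathsOf V) :
    (∃ a, P = ⟨a, a, .nil⟩) ∨
      ∃ (a c b : V) (f : a ⟶ c) (rest : Quiver.Path c b),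
        P = ⟨a, b, f.toPath.comp rest⟩ := by
  obtain ⟨a, b, q⟩ := P
  by_cases hq : q.length = 0
  · obtain rfl := Quiver.Path.eq_of_length_zero q hq
    obtain rfl := Quiver.Path.eq_nil_of_length_zero q hq
    exact .inl ⟨a, rfl⟩
  · obtain ⟨c, f, rest, rfl, -⟩ := (Quiver.Path.length_ne_zero_iff_eq_comp q).mp hq
    exact .inr ⟨a, c, b, f, rest, rfl⟩

lemma popFirst_toPath_comp {a c : V} (f : a ⟶ c) :
    ∀ {b : V} (rest : Quiver.Path c b), popFirst (f.toPath.comp rest) = some ⟨c, f, rest⟩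
  | _, .nil => rfl
  | _, .cons .nil _ => rfl
  | _, .cons (.cons r g) h => by
    have ih := popFirst_toPath_comp f (r.cons g)
    rw [Quiver.Path.comp_cons] at ih
    rw [Quiver.Path.comp_cons, Quiver.Path.comp_cons, popFirst, ih]

lemma pathBasis_injective : Function.Injective (pathBasis : PathsOf V → PathAlg V) :=
  Finsupp.single_left_injective one_ne_zero

lemma pathBasis_ne_zero (P : PathsOf V) : pathBasis P ≠ 0 :=
  Finsupp.single_ne_zero.mpr one_ne_zero

lemma pathBasis_apply_of_ne {P Q : PathsOf V} (h : P ≠ Q) : pathBasis P Q = 0 :=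
  Finsupp.single_eq_of_ne h.symm

lemma rderBasis_toPath_comp (e : ArrowOf V) {a c b : V} (f : a ⟶ c) (rest : Quiver.Path c b) :
    rderBasis e ⟨a, b, f.toPath.comp rest⟩ =
      if (⟨a, c, f⟩ : ArrowOf V) = e then pathBasis ⟨c, b, rest⟩ else 0 := by
  simp only [rderBasis, popFirst_toPath_comp]

lemma rderBasis_apply_eq_zero {a c b : V} {f : a ⟶ c} {rest : Quiver.Path c b}
    {P : PathsOf V}
    (hP : P ≠ ⟨a, b, f.toPath.comp rest⟩) : rderBasis ⟨a, c, f⟩ P ⟨c, b, rest⟩ = 0 := by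
  rcases P.eq_nil_or_eq_toPath_comp with ⟨x, rfl⟩ | ⟨x, y, z, g, r, rfl⟩
  · rfl
  · rw [rderBasis_toPath_comp]
    split_ifs with he
    · cases he
      exact pathBasis_apply_of_ne fun h => hP (by cases h; rfl)
    · rfl

lemma lderBasis_apply_eq_zero {u v c : V} {g : u ⟶ v} {rest : Quiver.Path c u} {P : PathsOf V}
    (hP : P ≠ ⟨c, v, rest.cons g⟩) : lderBasis ⟨u, v, g⟩ P ⟨c, u, rest⟩ = 0 := by
  obtain ⟨x, y, _ | ⟨p, f⟩⟩ := P
  · rfl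
  · simp only [lderBasis]
    split_ifs with he
    · cases he
      exact pathBasis_apply_of_ne fun h => hP (by cases h; rfl)
    · rfl

lemma rder_apply (e : ArrowOf V) (ω : PathAlg V) (R : PathsOf V) :
    rder e ω R = ω.sum fun P c => c * rderBasis e P R := by
  simp [rder, Finsupp.lsum_apply, Finsupp.sum_apply]

lemma lder_apply (e : ArrowOf V) (ω : PathAlg V) (R : PathsOf V) :
    lder e ω R = ω.sum fun P c => c * lderBasis e P R := by
  simp [lder, Finsupp.lsum_apply, Finsupp.sum_apply]

lemma rder_apply_mk {a c b : V} (f : a ⟶ c) (rest : Quiver.Path c b) (ω : PathAlg V) :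
    rder ⟨a, c, f⟩ ω ⟨c, b, rest⟩ = ω ⟨a, b, f.toPath.comp rest⟩ := by
  rw [rder_apply, Finsupp.sum_eq_single _
    (fun P _ hP => by rw [rderBasis_apply_eq_zero hP, mul_zero]) (by simp),
    rderBasis_toPath_comp, if_pos rfl, pathBasis, Finsupp.single_eq_same, mul_one]

lemma lder_apply_mk {u v c : V} (g : u ⟶ v) (rest : Quiver.Path c u) (ω : PathAlg V) :
    lder ⟨u, v, g⟩ ω ⟨c, u, rest⟩ = ω ⟨c, v, rest.cons g⟩ := by
  rw [lder_apply, Finsupp.sum_eq_single _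
    (fun P _ hP => by rw [lderBasis_apply_eq_zero hP, mul_zero]) (by simp)]
  simp [lderBasis, pathBasis]

lemma twistShiftBasis_toPath_comp (τ : QuivAut V) {a c b : V} (f : a ⟶ c)
    (rest : Quiver.Path c b) :
    twistShiftBasis τ ⟨a, b, f.toPath.comp rest⟩ =
      if h : b = τ.onV a then
        pathBasis ⟨c, τ.onV c, (h ▸ rest).comp (τ.onA f).toPath⟩
      else 0 := by
  simp only [twistShiftBasis, popFirst_toPath_comp]

lemma exists_eq_of_twistShiftBasis_eq_pathBasis (τ : QuivAut V) {P Q : PathsOf V}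
    (h : twistShiftBasis τ P = pathBasis Q) :
    ∃ (a c : V) (f : a ⟶ c) (rest : Quiver.Path c (τ.onV a)),
      P = ⟨a, τ.onV a, f.toPath.comp rest⟩ ∧ Q = ⟨c, τ.onV c, rest.cons (τ.onA f)⟩ := by
  rcases P.eq_nil_or_eq_toPath_comp with ⟨a, rfl⟩ | ⟨a, c, b, f, rest, rfl⟩
  · exact absurd h.symm (pathBasis_ne_zero Q)
  · rw [twistShiftBasis_toPath_comp] at h
    split_ifs at h with hb
    · subst hb
      exact ⟨a, c, f, rest, rfl, (pathBasis_injective h).symm⟩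
    · exact absurd h.symm (pathBasis_ne_zero Q)

/-- Evaluating `[a^τ* ω] = ε [ω a*]` at the path `rest` compares the coefficients of
`rest · a^τ` and `a · rest`. -/
lemma coeff_toPath_comp_eq_of_lder_eq_smul_rder (τ : QuivAut V) {ω : PathAlg V} {ε : ℂ}
    (hε : ε * ε = 1) {a c : V} (f : a ⟶ c) (rest : Quiver.Path c (τ.onV a))
    (h : lder (τ.mapArrow ⟨a, c, f⟩) ω = ε • rder ⟨a, c, f⟩ ω) :
    ω ⟨a, τ.onV a, f.toPath.comp rest⟩ = ε * ω ⟨c, τ.onV c, rest.cons (τ.onA f)⟩ := by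
  have h_rest := congrArg (fun φ : PathAlg V => φ ⟨c, τ.onV a, rest⟩) h
  simp only [QuivAut.mapArrow, lder_apply_mk, Finsupp.smul_apply, smul_eq_mul,
    rder_apply_mk] at h_rest
  rw [h_rest, ← mul_assoc, hε, one_mul]

theorem twisted_superpotential_coefficients_general (τ : QuivAut V) (n : ℕ)
    (ω : PathAlg V)
    (hsup : ∀ e : ArrowOf V,
      lder (τ.mapArrow e) ω = ((-1 : ℂ)) ^ (n - 1) • rder e ω) :
    ∀ P Q : PathsOf V, (P.2.2 : Quiver.Path P.1 P.2.1).length = n →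
      twistShiftBasis τ P = pathBasis Q →
      ω P = ((-1 : ℂ)) ^ (n - 1) * ω Q := by
  intro P Q _ hPQ
  obtain ⟨a, c, f, rest, rfl, rfl⟩ := exists_eq_of_twistShiftBasis_eq_pathBasis τ hPQ
  have hsign : ((-1 : ℂ)) ^ (n - 1) * (-1) ^ (n - 1) = 1 := by
    rw [← mul_pow, neg_one_mul, neg_neg, one_pow]
  exact coeff_toPath_comp_eq_of_lder_eq_smul_rder τ hsign f rest (hsup _)

/-- If ω is a twisted superpotential of degree n (a twisted
weak potential satisfying `[a^{τ*}ω] = (-1)^(n-1)[ωa*]` for all arrows `a`),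
then its coefficients satisfy `c_{p₁⋯pₙ} = (-1)^(n-1) c_{pₙ^τ p₁⋯p_{n-1}}`. -/
theorem twisted_superpotential_coefficients (τ : QuivAut V) (n : ℕ) (hn : 1 ≤ n)
    (ω : PathAlg V)
    (hdeg : ∀ P ∈ ω.support, (P.2.2 : Quiver.Path P.1 P.2.1).length = n)
    (htwisted : ∀ P ∈ ω.support, P.1 = τ.onV P.2.1)
    (hsup : ∀ e : ArrowOf V,
      lder (τ.mapArrow e) ω = ((-1 : ℂ)) ^ (n - 1) • rder e ω) :
    ∀ P Q : PathsOf V, (P.2.2 : Quiver.Path P.1 P.2.1).length = n →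
      twistShiftBasis τ P = pathBasis Q →
      ω P = ((-1 : ℂ)) ^ (n - 1) * ω Q :=
  twisted_superpotential_coefficients_general τ n ω hsup

end
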